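/- Let π = D_{2n} be the dihedral group of order 2n with presentation ⟨x, y | xⁿy⁻², xyxy⁻¹, y²⟩, and let d₂ : ℤπ³ → ℤπ² be right multiplication by the matrix with rows (N_x, −(1+y)), (1+xy, x−1), (0, y+1). Then there is a short exact sequence of ℤπ-modules 0 → ℤπ/N → ker(d₂) → (I,2) → 0, where the first map sends 1 to (x−1, 1−xy, 0) and the second map sends (a,b,c) to c. -/

import Mathlib

/-!
Two characters ℤπ → ℤ do all the bookkeeping: the augmentation ε and the sign character χ
(x ↦ 1, y ↦ -1), which agree mod 2. If d₂(a,b,c) = 0, then χ applied to the first coordinate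
gives n·χ(a) = 0 and ε applied to the second gives ε(a) = ε(c), so ε(c) ≡ χ(a) = 0 mod 2.
If moreover c = 0, then ε(a) = χ(a) = 0 says that the coefficient sums of a over both cosets
of ⟨x⟩ vanish, so a = w(x-1); then u = b - w(1-xy) is fixed by x and negated by xy, and such
elements are the multiples of N_x(1-xy). Likewise an element fixed by all of π is a multiple of
N, which identifies the kernel of 1 ↦ (x-1, 1-xy, 0). Finally the image of ker d₂ in the last
coordinate is a left ideal containing x-1, y-1 and 2, hence all of (I,2).
-/

open TensorProduct

section SubQuot
variable {G : Type*} [Group G] {V : Type*} [AddCommGroup V] [Module ℤ V]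

/-- The restriction of a representation to an invariant submodule. -/
def subRep (ρ : Representation ℤ G V) (p : Submodule ℤ V)
    (hp : ∀ g : G, ∀ x ∈ p, ρ g x ∈ p) : Representation ℤ G p where
  toFun g := (ρ g).restrict (hp g)
  map_one' := by
    ext x
    simp [LinearMap.restrict_apply]
  map_mul' g h := by
    ext x
    simp [LinearMap.restrict_apply, map_mul]

/-- The representation induced on the quotient by an invariant submodule. -/
noncomputable def quotRep (ρ : Representation ℤ G V) (p : Submodule ℤ V)
    (hp : ∀ g : G, ∀ x ∈ p, ρ g x ∈ p) : Representation ℤ G (V ⧸ p) where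
  toFun g := Submodule.mapQ p p (ρ g) (hp g)
  map_one' := by
    apply LinearMap.ext
    intro x
    obtain ⟨v, rfl⟩ := Submodule.Quotient.mk_surjective p x
    simp [Submodule.mapQ_apply]
  map_mul' g h := by
    apply LinearMap.ext
    intro x
    obtain ⟨v, rfl⟩ := Submodule.Quotient.mk_surjective p x
    simp [Submodule.mapQ_apply, map_mul]

end SubQuot

section GroupRing
variable (G : Type*) [Group G]

/-- The left regular representation of `G` on the group ring `ℤG`. -/
noncomputable def regRep : Representation ℤ G (MonoidAlgebra ℤ G) where
  toFun g := LinearMap.mulLeft ℤ (MonoidAlgebra.of ℤ G g)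
  map_one' := by
    apply LinearMap.ext; intro x
    simp [MonoidAlgebra.of_apply, ← MonoidAlgebra.one_def]
  map_mul' g h := by
    apply LinearMap.ext; intro x
    simp only [MonoidAlgebra.of_apply, LinearMap.mulLeft_apply, Module.End.mul_apply]
    rw [← mul_assoc, MonoidAlgebra.single_mul_single, mul_one]

/-- The augmentation map `ε : ℤG → ℤ`. -/
noncomputable def aug : MonoidAlgebra ℤ G →ₐ[ℤ] ℤ := MonoidAlgebra.lift ℤ ℤ G 1

/-- The augmentation ideal `I = ker(ε : ℤG → ℤ)`. -/
noncomputable def augI : Ideal (MonoidAlgebra ℤ G) := RingHom.ker (aug G).toRingHom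

/-- The mod 2 augmentation map `ℤG → ℤ/2`. -/
noncomputable def aug2 : MonoidAlgebra ℤ G →+* ZMod 2 :=
  (Int.castRingHom (ZMod 2)).comp (aug G).toRingHom

/-- The ideal `(I, 2) = ker(ℤG → ℤ/2)` generated by the augmentation ideal and `2`. -/
noncomputable def I2 : Ideal (MonoidAlgebra ℤ G) := RingHom.ker (aug2 G)

/-- The norm element `N = ∑_{g ∈ G} g ∈ ℤG`. -/
noncomputable def Nelt [Fintype G] : MonoidAlgebra ℤ G := ∑ g : G, MonoidAlgebra.of ℤ G g

/-- The (left) ideal of `ℤG` generated by the norm element `N`; the quotient by it is `ℤG/N`. -/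
noncomputable def NIdeal [Fintype G] : Ideal (MonoidAlgebra ℤ G) := Ideal.span {Nelt G}

/-- The left ideal `(N, 2)` of `ℤG` generated by the norm element `N` and `2`. -/
noncomputable def N2 [Fintype G] : Ideal (MonoidAlgebra ℤ G) := Ideal.span {Nelt G, 2}

lemma aug_single (g : G) : aug G (MonoidAlgebra.single g 1) = 1 := by
  simp [aug, MonoidAlgebra.lift_single]

lemma of_sub_one_mem_augI (g : G) :
    MonoidAlgebra.of ℤ G g - 1 ∈ (augI G).restrictScalars ℤ := by
  simp [augI, RingHom.mem_ker, map_sub, aug_single]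

lemma of_sub_one_mem_I2 (g : G) :
    MonoidAlgebra.of ℤ G g - 1 ∈ (I2 G).restrictScalars ℤ := by
  simp [I2, aug2, RingHom.mem_ker, map_sub, aug_single]

lemma two_mem_I2 : (2 : MonoidAlgebra ℤ G) ∈ (I2 G).restrictScalars ℤ := by
  have : (aug2 G) 2 = 2 := by simp [map_ofNat]
  simp [I2, RingHom.mem_ker, this]
  decide

lemma N_mem_I2 [Fintype G] (h : Even (Fintype.card G)) :
    Nelt G ∈ (I2 G).restrictScalars ℤ := by
  have : (aug2 G) (Nelt G) = (Fintype.card G : ZMod 2) := by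
    simp [Nelt, map_sum, aug2, aug_single]
  simp only [Submodule.restrictScalars_mem, I2, RingHom.mem_ker, this]
  rw [ZMod.natCast_eq_zero_iff]
  exact h.two_dvd

lemma N_mem_N2 [Fintype G] : Nelt G ∈ (N2 G).restrictScalars ℤ :=
  Ideal.subset_span (by simp)

lemma two_mem_N2 [Fintype G] : (2 : MonoidAlgebra ℤ G) ∈ (N2 G).restrictScalars ℤ :=
  Ideal.subset_span (by simp)

lemma ideal_invariant (J : Ideal (MonoidAlgebra ℤ G)) :
    ∀ g : G, ∀ x ∈ J.restrictScalars ℤ, (regRep G) g x ∈ J.restrictScalars ℤ := by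
  intro g x hx
  exact J.mul_mem_left _ hx

/-- A (left) ideal of `ℤG`, regarded as a representation of `G`. -/
noncomputable def idealRep (J : Ideal (MonoidAlgebra ℤ G)) :
    Representation ℤ G ↥(J.restrictScalars ℤ) :=
  subRep (regRep G) (J.restrictScalars ℤ) (ideal_invariant G J)

/-- The quotient `ℤG/N` of `ℤG` by the ideal generated by the norm element, as a
representation of `G`. -/
noncomputable def quotNRep [Fintype G] :
    Representation ℤ G (MonoidAlgebra ℤ G ⧸ (NIdeal G).restrictScalars ℤ) :=
  quotRep (regRep G) ((NIdeal G).restrictScalars ℤ) (ideal_invariant G (NIdeal G))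

/-- `2` as an element of `(I,2)`. -/
noncomputable def twoI2 : ↥((I2 G).restrictScalars ℤ) := ⟨2, two_mem_I2 G⟩

/-- `g - 1` as an element of `(I,2)`. -/
noncomputable def gm1 (g : G) : ↥((I2 G).restrictScalars ℤ) :=
  ⟨MonoidAlgebra.of ℤ G g - 1, of_sub_one_mem_I2 G g⟩

/-- `g - 1` as an element of the augmentation ideal `I`. -/
noncomputable def gm1I (g : G) : ↥((augI G).restrictScalars ℤ) :=
  ⟨MonoidAlgebra.of ℤ G g - 1, of_sub_one_mem_augI G g⟩

/-- The norm element as an element of `(I,2)` (for `G` of even order). -/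
noncomputable def NeltI2 [Fintype G] (h : Even (Fintype.card G)) :
    ↥((I2 G).restrictScalars ℤ) := ⟨Nelt G, N_mem_I2 G h⟩

/-- The norm element as an element of `(N,2)`. -/
noncomputable def NeltN2 [Fintype G] : ↥((N2 G).restrictScalars ℤ) := ⟨Nelt G, N_mem_N2 G⟩

end GroupRing

section Dihedral

/-- The element `x = r 1` (rotation) of the dihedral group, in the group ring `ℤ[D_{2n}]`. -/
noncomputable def XD (n : ℕ) : MonoidAlgebra ℤ (DihedralGroup n) :=
  MonoidAlgebra.of ℤ (DihedralGroup n) (DihedralGroup.r 1)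

/-- The element `y = sr 0` (reflection) of the dihedral group, in the group ring `ℤ[D_{2n}]`. -/
noncomputable def YD (n : ℕ) : MonoidAlgebra ℤ (DihedralGroup n) :=
  MonoidAlgebra.of ℤ (DihedralGroup n) (DihedralGroup.sr 0)

/-- The element `N_x = 1 + x + ⋯ + x^{n-1}` of `ℤ[D_{2n}]`. -/
noncomputable def NxD (n : ℕ) : MonoidAlgebra ℤ (DihedralGroup n) :=
  ∑ i ∈ Finset.range n, XD n ^ i

end Dihedral

namespace MonoidAlgebra

theorem of_pow_sub_one_mem_span {k M : Type*} [Ring k] [Monoid M] (g : M) (m : ℕ) :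
    of k M (g ^ m) - 1 ∈ Ideal.span {of k M g - 1} :=
  Ideal.mem_span_singleton'.mpr ⟨_, by rw [geom_sum_mul, map_pow]⟩

variable {k G : Type*} [CommRing k] [Group G]

theorem mul_coeff_eq_coeff_one_of_mul_of_eq_smul (χ : G →* k) {s : Set G}
    (hs : Submonoid.closure s = ⊤) {u : MonoidAlgebra k G}
    (hu : ∀ g ∈ s, u * of k G g = χ g • u) (g : G) : χ g * u.coeff g = u.coeff 1 := by
  have hall : ∀ g, u * of k G g = χ g • u := fun g ↦ by
    induction (hs ▸ Submonoid.mem_top g : g ∈ Submonoid.closure s)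
      using Submonoid.closure_induction with
    | mem g hg => exact hu g hg
    | one => rw [map_one, mul_one, map_one, one_smul]
    | mul g h _ _ ihg ihh =>
      rw [map_mul, ← mul_assoc, ihg, smul_mul_assoc, ihh, smul_smul, map_mul]
  simpa [of_apply, coeff_mul_single_apply] using congr($(hall g).coeff g).symm

theorem of_sub_one_mem_of_closure_eq_top (J : Ideal (MonoidAlgebra k G)) {s : Set G}
    (hs : Submonoid.closure s = ⊤) (hJ : ∀ g ∈ s, of k G g - 1 ∈ J) (g : G) :
    of k G g - 1 ∈ J := by
  induction (hs ▸ Submonoid.mem_top g : g ∈ Submonoid.closure s)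
    using Submonoid.closure_induction with
  | mem g hg => exact hJ g hg
  | one => rw [map_one, sub_self]; exact J.zero_mem
  | mul g h _ _ ihg ihh =>
    have : of k G (g * h) - 1 = of k G g * (of k G h - 1) + (of k G g - 1) := by
      rw [map_mul]; noncomm_ring
    rw [this]
    exact J.add_mem (J.mul_mem_left _ ihh) ihg

end MonoidAlgebra

section GroupRing

open MonoidAlgebra

variable {G : Type*} [Group G]

theorem mem_I2_iff {w : MonoidAlgebra ℤ G} : w ∈ I2 G ↔ (2 : ℤ) ∣ aug G w :=
  ZMod.intCast_zmod_eq_zero_iff_dvd _ 2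

theorem two_dvd_aug_sub_lift_units (χ : G →* ℤˣ) (u : MonoidAlgebra ℤ G) :
    2 ∣ aug G u - lift ℤ ℤ G ((Units.coeHom ℤ).comp χ) u := by
  induction u using MonoidAlgebra.induction_linear with
  | zero => simp
  | add f g hf hg => rw [map_add, map_add, add_sub_add_comm]; exact dvd_add hf hg
  | single g c =>
    rcases Int.units_eq_one_or (χ g) with h | h <;>
      simp [aug, lift_single, h, ← two_mul]

theorem I2_le_of_forall_of_sub_one_mem (J : Ideal (MonoidAlgebra ℤ G))
    (h2 : (2 : MonoidAlgebra ℤ G) ∈ J) (hJ : ∀ g, of ℤ G g - 1 ∈ J) : I2 G ≤ J := by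
  have hsub : ∀ w, w - (aug G w : MonoidAlgebra ℤ G) ∈ J := fun w ↦ by
    induction w using MonoidAlgebra.induction_linear with
    | zero => simp
    | add f g hf hg =>
      rw [map_add, Int.cast_add, add_sub_add_comm]; exact J.add_mem hf hg
    | single g c =>
      have : single g c - ((aug G (single g c) : ℤ) : MonoidAlgebra ℤ G) =
          c • (of ℤ G g - 1) := by
        simp [aug, lift_single, smul_sub, of_apply]
      rw [this]; exact Submodule.smul_of_tower_mem J c (hJ g)
  intro w hw
  obtain ⟨m, hm⟩ := mem_I2_iff.mp hw
  have : w = (w - (aug G w : MonoidAlgebra ℤ G)) + (m : MonoidAlgebra ℤ G) * 2 := by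
    rw [hm]; push_cast; noncomm_ring
  rw [this]
  exact J.add_mem (hsub w) (J.mul_mem_left _ h2)

variable [Fintype G]

theorem Nelt_mul_of (g : G) : Nelt G * of ℤ G g = Nelt G := by
  simp only [Nelt, Finset.sum_mul, ← map_mul]
  exact Equiv.sum_comp (Equiv.mulRight g) (fun h ↦ of ℤ G h)

theorem coeff_Nelt (g : G) : (Nelt G).coeff g = 1 := by
  simp [Nelt, coeff_sum, of_apply, coeff_single]

theorem mem_NIdeal_of_mul_of_eq_self {s : Set G} (hs : Submonoid.closure s = ⊤)
    {v : MonoidAlgebra ℤ G} (hv : ∀ g ∈ s, v * of ℤ G g = v) : v ∈ NIdeal G := by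
  have hcoeff := mul_coeff_eq_coeff_one_of_mul_of_eq_smul 1 hs (u := v) (by simpa using hv)
  have : v = v.coeff 1 • Nelt G := by
    ext g
    rw [coeff_smul, Finsupp.smul_apply, coeff_Nelt, smul_eq_mul, mul_one]
    simpa using hcoeff g
  rw [this]
  exact Submodule.smul_of_tower_mem _ _ (Ideal.subset_span rfl)

end GroupRing

namespace DihedralGroup

variable {n : ℕ}

def sign : DihedralGroup n →* ℤˣ where
  toFun
    | r _ => 1
    | sr _ => -1
  map_one' := rfl
  map_mul' := by rintro (i | i) (j | j) <;> simp

@[simp] theorem sign_r (i : ZMod n) : sign (r i) = 1 := rfl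

@[simp] theorem sign_sr (i : ZMod n) : sign (sr i) = -1 := rfl

theorem closure_r_one_sr [NeZero n] (a : ZMod n) : Submonoid.closure {r 1, sr a} = ⊤ := by
  refine eq_top_iff.mpr fun g _ ↦ ?_
  have hr : ∀ i : ZMod n, r i ∈ Submonoid.closure {r 1, sr a} := fun i ↦ by
    rw [← ZMod.natCast_zmod_val i, ← r_one_pow]
    exact pow_mem (Submonoid.subset_closure (by simp)) _
  cases g with
  | r i => exact hr i
  | sr i =>
    rw [← sub_sub_cancel a i, ← r_mul_sr]
    exact mul_mem (hr _) (Submonoid.subset_closure (by simp))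

end DihedralGroup

namespace DihedralGroupRing

open DihedralGroup MonoidAlgebra

variable {n : ℕ}

local notation "ℤπ" => MonoidAlgebra ℤ (DihedralGroup n)

variable (n) in
noncomputable def signChar : ℤπ →ₐ[ℤ] ℤ := lift ℤ ℤ _ ((Units.coeHom ℤ).comp sign)

theorem YD_mul_YD : YD n * YD n = 1 := by
  rw [YD, ← map_mul, sr_mul_sr, sub_zero, ← one_def, map_one]

theorem XD_mul_YD : XD n * YD n = of ℤ _ (sr (-1)) := by
  rw [XD, YD, ← map_mul, r_mul_sr, zero_sub]

theorem XD_mul_YD_mul_XD : XD n * YD n * XD n = YD n := by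
  rw [XD_mul_YD, XD, YD, ← map_mul, sr_mul_r, neg_add_cancel]

theorem XD_pow : XD n ^ n = 1 := by
  rw [XD, ← map_pow, r_one_pow_n, map_one]

theorem NxD_mul_XD_sub_one : NxD n * (XD n - 1) = 0 := by
  rw [NxD, geom_sum_mul, XD_pow, sub_self]

theorem XD_sub_one_mul_NxD : (XD n - 1) * NxD n = 0 := by
  rw [NxD, mul_geom_sum, XD_pow, sub_self]

theorem NxD_mul_XD : NxD n * XD n = NxD n :=
  sub_eq_zero.mp (by rw [← mul_sub_one, NxD_mul_XD_sub_one])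

theorem XD_sub_one_mul_one_add_YD :
    (XD n - 1) * (1 + YD n) = (1 - XD n * YD n) * (XD n - 1) := by
  have : XD n * (YD n * XD n) = YD n := by rw [← mul_assoc, XD_mul_YD_mul_XD]
  noncomm_ring
  rw [this]

theorem one_sub_XD_mul_YD_mul_one_add : (1 - XD n * YD n) * (1 + XD n * YD n) = 0 := by
  have : XD n * YD n * (XD n * YD n) = 1 := by rw [← mul_assoc, XD_mul_YD_mul_XD, YD_mul_YD]
  rw [sub_mul, one_mul, mul_add, mul_one, this]
  abel

theorem NxD_eq_sum [NeZero n] : NxD n = ∑ i : ZMod n, of ℤ _ (r i) := by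
  refine Finset.sum_nbij' (fun k ↦ (k : ZMod n)) ZMod.val (by simp)
    (fun i _ ↦ by simpa using i.val_lt) (fun k hk ↦ ZMod.val_cast_of_lt (by simpa using hk))
    (fun i _ ↦ ZMod.natCast_zmod_val i) (fun k _ ↦ ?_)
  rw [XD, ← map_pow, r_one_pow]

theorem YD_mul_NxD [NeZero n] : YD n * NxD n = NxD n * YD n := by
  simp only [NxD_eq_sum, Finset.mul_sum, Finset.sum_mul, YD, ← map_mul, sr_mul_r, r_mul_sr,
    zero_add, zero_sub]
  exact (Equiv.sum_comp (Equiv.neg (ZMod n)) fun i ↦ of ℤ _ (sr i)).symm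

theorem coeff_one_NxD_mul_one_sub [NeZero n] : (NxD n * (1 - XD n * YD n)).coeff 1 = 1 := by
  simp [mul_sub, XD_mul_YD, NxD_eq_sum, Finset.sum_mul, coeff_sum, of_apply, coeff_single,
    Finsupp.single_apply, ← r_zero]

theorem aug_XD : aug _ (XD n) = 1 := aug_single _ _

theorem aug_YD : aug _ (YD n) = 1 := aug_single _ _

theorem signChar_XD : signChar n (XD n) = 1 := by simp [signChar, XD]

theorem signChar_YD : signChar n (YD n) = -1 := by simp [signChar, YD]

theorem map_NxD {S F : Type*} [Semiring S] [FunLike F ℤπ S] [RingHomClass F ℤπ S] (φ : F)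
    (h : φ (XD n) = 1) : φ (NxD n) = n := by
  simp [NxD, h]

variable (n) in
noncomputable def d₂ : ℤπ × ℤπ × ℤπ →ₗ[ℤπ] ℤπ × ℤπ :=
  (LinearMap.toSpanSingleton ℤπ _ (NxD n, -(1 + YD n))).coprod
    ((LinearMap.toSpanSingleton ℤπ _ (1 + XD n * YD n, XD n - 1)).coprod
      (LinearMap.toSpanSingleton ℤπ _ (0, YD n + 1)))

variable (n) in
noncomputable def ι : ℤπ →ₗ[ℤπ] ℤπ × ℤπ × ℤπ :=
  LinearMap.toSpanSingleton ℤπ _ (XD n - 1, 1 - XD n * YD n, 0)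

theorem d₂_apply (a b c : ℤπ) :
    d₂ n (a, b, c) = (a * NxD n + b * (1 + XD n * YD n),
      -(a * (1 + YD n)) + b * (XD n - 1) + c * (YD n + 1)) := by
  simp only [d₂, LinearMap.coprod_apply, LinearMap.toSpanSingleton_apply, Prod.smul_mk,
    smul_eq_mul, mul_neg, mul_zero, Prod.mk_add_mk, add_zero, add_assoc]

theorem ι_apply (v : ℤπ) : ι n v = (v * (XD n - 1), v * (1 - XD n * YD n), 0) := by
  simp [ι]

theorem d₂_ι (v : ℤπ) : d₂ n (ι n v) = 0 := by
  rw [ι, LinearMap.toSpanSingleton_apply, map_smul, d₂_apply, XD_sub_one_mul_NxD,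
    one_sub_XD_mul_YD_mul_one_add, XD_sub_one_mul_one_add_YD]
  simp

theorem signChar_eq_zero_of_d₂_eq_zero [NeZero n] {a b c : ℤπ} (h : d₂ n (a, b, c) = 0) :
    signChar n a = 0 := by
  rw [d₂_apply, Prod.mk_eq_zero] at h
  have := congr(signChar n $(h.1))
  simpa [map_NxD, signChar_XD, signChar_YD, NeZero.ne n] using this

theorem aug_eq_of_d₂_eq_zero {a b c : ℤπ} (h : d₂ n (a, b, c) = 0) : aug _ a = aug _ c := by
  rw [d₂_apply, Prod.mk_eq_zero] at h
  have := congr(aug _ $(h.2))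
  simp [aug_XD, aug_YD] at this
  linarith

theorem ι_eq_zero_iff [NeZero n] (v : ℤπ) : ι n v = 0 ↔ v ∈ NIdeal (DihedralGroup n) := by
  simp only [ι_apply, Prod.mk_eq_zero, and_true]
  constructor
  · rintro ⟨hx, hxy⟩
    refine mem_NIdeal_of_mul_of_eq_self (closure_r_one_sr (-1)) ?_
    rintro g (rfl | rfl)
    · exact (sub_eq_zero.mp (by rwa [mul_sub_one] at hx))
    · rw [XD_mul_YD, mul_one_sub, sub_eq_zero] at hxy
      exact hxy.symm
  · intro hv
    obtain ⟨w, rfl⟩ := Ideal.mem_span_singleton'.mp hv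
    rw [mul_assoc, mul_assoc, mul_sub_one, mul_one_sub, XD_mul_YD, XD, Nelt_mul_of, Nelt_mul_of]
    simp

theorem mem_I2_of_d₂_eq_zero [NeZero n] {a b c : ℤπ} (h : d₂ n (a, b, c) = 0) :
    c ∈ I2 (DihedralGroup n) := by
  rw [mem_I2_iff, ← aug_eq_of_d₂_eq_zero h, ← sub_zero (aug _ a),
    ← signChar_eq_zero_of_d₂_eq_zero h]
  exact two_dvd_aug_sub_lift_units sign a

theorem exists_mul_XD_sub_one_eq [NeZero n] {u : ℤπ} (haug : aug _ u = 0)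
    (hsign : signChar n u = 0) : ∃ w, w * (XD n - 1) = u := by
  set J := Ideal.span {XD n - 1}
  have hr : ∀ i : ZMod n, of ℤ _ (r i) - 1 ∈ J := fun i ↦ by
    rw [← ZMod.natCast_zmod_val i, ← r_one_pow]
    exact of_pow_sub_one_mem_span _ _
  have hmod : ∀ u : ℤπ, ∃ p q : ℤ, u - (p • 1 + q • YD n) ∈ J := fun u ↦ by
    induction u using MonoidAlgebra.induction_linear with
    | zero => exact ⟨0, 0, by simp⟩
    | add f g hf hg =>
      obtain ⟨p, q, hf⟩ := hf
      obtain ⟨p', q', hg⟩ := hg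
      refine ⟨p + p', q + q', ?_⟩
      convert J.add_mem hf hg using 1
      simp only [add_smul]
      abel
    | single g c =>
      cases g with
      | r i =>
        refine ⟨c, 0, ?_⟩
        convert Submodule.smul_of_tower_mem J c (hr i) using 1
        simp [smul_sub, of_apply]
      | sr i =>
        refine ⟨0, c, ?_⟩
        convert Submodule.smul_of_tower_mem J c (J.mul_mem_left (YD n) (hr i)) using 1
        simp [mul_sub, smul_sub, YD, of_apply]
  have hJ : ∀ φ : ℤπ →ₐ[ℤ] ℤ, φ (XD n) = 1 → ∀ v ∈ J, φ v = 0 := fun φ hφ ↦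
    Ideal.span_le (I := RingHom.ker φ).mpr (by simp [hφ])
  obtain ⟨p, q, hpq⟩ := hmod u
  have h1 := hJ (aug _) aug_XD _ hpq
  have h2 := hJ (signChar n) signChar_XD _ hpq
  simp [haug, hsign, aug_YD, signChar_YD] at h1 h2
  obtain ⟨rfl, rfl⟩ : p = 0 ∧ q = 0 := by omega
  simpa using Ideal.mem_span_singleton'.mp hpq

theorem eq_coeff_one_smul_of_mul_XD_sub_one_eq_zero [NeZero n] {u : ℤπ}
    (hx : u * (XD n - 1) = 0) (hxy : u * (1 + XD n * YD n) = 0) :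
    u = u.coeff 1 • (NxD n * (1 - XD n * YD n)) := by
  let χ : DihedralGroup n →* ℤ := (Units.coeHom ℤ).comp sign
  have hcoeff : ∀ {v : ℤπ}, v * (XD n - 1) = 0 → v * (1 + XD n * YD n) = 0 →
      ∀ g, χ g * v.coeff g = v.coeff 1 := fun hx hxy ↦ by
    refine mul_coeff_eq_coeff_one_of_mul_of_eq_smul χ (closure_r_one_sr (-1)) ?_
    rintro g (rfl | rfl)
    · simpa [χ] using sub_eq_zero.mp (by rwa [mul_sub_one] at hx)
    · rw [mul_add, mul_one, XD_mul_YD] at hxy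
      simpa [χ] using eq_neg_of_add_eq_zero_right hxy
  set T := NxD n * (1 - XD n * YD n)
  have hTx : T * (XD n - 1) = 0 := by
    rw [mul_assoc, ← XD_sub_one_mul_one_add_YD, ← mul_assoc, NxD_mul_XD_sub_one, zero_mul]
  have hTxy : T * (1 + XD n * YD n) = 0 := by
    rw [mul_assoc, one_sub_XD_mul_YD_mul_one_add, mul_zero]
  ext g
  have hχ : χ g ≠ 0 := by simp [χ]
  apply mul_left_cancel₀ hχ
  rw [coeff_smul, Finsupp.smul_apply, smul_eq_mul, hcoeff hx hxy, mul_left_comm,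
    hcoeff hTx hTxy, coeff_one_NxD_mul_one_sub, mul_one]

theorem eq_zero_iff_exists_eq_ι [NeZero n] {a b c : ℤπ} (h : d₂ n (a, b, c) = 0) :
    c = 0 ↔ ∃ v, (a, b, c) = ι n v := by
  refine ⟨?_, fun ⟨v, hv⟩ ↦ by simpa [ι_apply] using congr($hv.2.2)⟩
  rintro rfl
  obtain ⟨w, hw⟩ := exists_mul_XD_sub_one_eq (by rw [aug_eq_of_d₂_eq_zero h, map_zero])
    (signChar_eq_zero_of_d₂_eq_zero h)
  rw [d₂_apply, Prod.mk_eq_zero, zero_mul, add_zero, neg_add_eq_zero] at h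
  obtain ⟨h1, h2⟩ := h
  have haN : a * NxD n = 0 := by rw [← hw, mul_assoc, XD_sub_one_mul_NxD, mul_zero]
  set u := b - w * (1 - XD n * YD n)
  have hux : u * (XD n - 1) = 0 := by
    rw [sub_mul, mul_assoc, ← XD_sub_one_mul_one_add_YD, ← mul_assoc, hw, h2, sub_self]
  have huxy : u * (1 + XD n * YD n) = 0 := by
    rw [sub_mul, mul_assoc, one_sub_XD_mul_YD_mul_one_add, mul_zero, sub_zero]
    rwa [haN, zero_add] at h1
  refine ⟨w + u.coeff 1 • NxD n, ?_⟩
  rw [ι_apply, add_mul, add_mul, smul_mul_assoc, smul_mul_assoc, NxD_mul_XD_sub_one, smul_zero,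
    add_zero, hw, ← eq_coeff_one_smul_of_mul_XD_sub_one_eq_zero hux huxy, add_sub_cancel]

theorem exists_d₂_eq_zero_of_mem_I2 [NeZero n] {w : ℤπ} (hw : w ∈ I2 (DihedralGroup n)) :
    ∃ a b, d₂ n (a, b, w) = 0 := by
  let S : Ideal ℤπ :=
    (LinearMap.ker (d₂ n)).map (LinearMap.snd ℤπ ℤπ ℤπ ∘ₗ LinearMap.snd ℤπ ℤπ _)
  have hS : ∀ a b c, d₂ n (a, b, c) = 0 → c ∈ S := fun a b c h ↦ ⟨(a, b, c), h, rfl⟩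
  have hx : XD n - 1 ∈ S := hS (XD n - 1) 0 _ (by
    rw [d₂_apply, XD_sub_one_mul_NxD, add_comm (YD n)]
    simp)
  have hy : YD n - 1 ∈ S := hS 0 0 _ (by
    rw [d₂_apply]
    simp [sub_mul, mul_add, YD_mul_YD])
  have h2 : 2 ∈ S := hS (1 + YD n) (-NxD n) 2 (by
    have hsq : (1 + YD n) * (1 + YD n) = 2 * (YD n + 1) := by
      rw [add_mul, one_mul, mul_add, mul_one, YD_mul_YD]
      noncomm_ring
    rw [d₂_apply, add_mul, one_mul, YD_mul_NxD, neg_mul, neg_mul, mul_add, mul_one, ← mul_assoc,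
      NxD_mul_XD, hsq, NxD_mul_XD_sub_one]
    simp)
  have hgen : ∀ g, of ℤ _ g - 1 ∈ S :=
    of_sub_one_mem_of_closure_eq_top S (closure_r_one_sr 0) (by
      rintro g (rfl | rfl)
      exacts [hx, hy])
  obtain ⟨⟨a, b, c⟩, hker, rfl⟩ := I2_le_of_forall_of_sub_one_mem S h2 hgen hw
  exact ⟨a, b, hker⟩

end DihedralGroupRing

/-- For `π = D_{2n}` with presentation `⟨x, y | xⁿy⁻², xyxy⁻¹, y²⟩` and
`d₂ : ℤπ³ → ℤπ²` right multiplication by the matrix with rows `(N_x, -(1+y))`, `(1+xy, x-1)`,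
`(0, y+1)`, there is a short exact sequence of `ℤπ`-modules
`0 → ℤπ/N → ker(d₂) → (I,2) → 0`, where the first map sends `1` to `(x-1, 1-xy, 0)` and the
second sends `(a,b,c)` to `c`.  This is stated elementwise below, writing
`d₂(a,b,c) = (aN_x + b(1+xy), -a(1+y) + b(x-1) + c(y+1))`. -/
theorem stmt15 (n : ℕ) [NeZero n] :
    -- the image of ℤπ/N lies in ker d₂
    (∀ v : MonoidAlgebra ℤ (DihedralGroup n),
      (v * (XD n - 1) * NxD n + v * (1 - XD n * YD n) * (1 + XD n * YD n),
        -(v * (XD n - 1) * (1 + YD n)) + v * (1 - XD n * YD n) * (XD n - 1) +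
          0 * (YD n + 1)) = 0) ∧
    -- the induced map ℤπ/N → ker d₂ is injective: v maps to 0 iff v ∈ (N)
    (∀ v : MonoidAlgebra ℤ (DihedralGroup n),
      (v * (XD n - 1), v * (1 - XD n * YD n), (0 : MonoidAlgebra ℤ (DihedralGroup n))) = 0 ↔
        v ∈ NIdeal (DihedralGroup n)) ∧
    -- the second map sends ker d₂ into (I,2)
    (∀ a b c : MonoidAlgebra ℤ (DihedralGroup n),
      (a * NxD n + b * (1 + XD n * YD n),
        -(a * (1 + YD n)) + b * (XD n - 1) + c * (YD n + 1)) = 0 →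
      c ∈ I2 (DihedralGroup n)) ∧
    -- exactness at ker d₂
    (∀ a b c : MonoidAlgebra ℤ (DihedralGroup n),
      (a * NxD n + b * (1 + XD n * YD n),
        -(a * (1 + YD n)) + b * (XD n - 1) + c * (YD n + 1)) = 0 →
      (c = 0 ↔ ∃ v : MonoidAlgebra ℤ (DihedralGroup n),
        (a, b, c) = (v * (XD n - 1), v * (1 - XD n * YD n), 0))) ∧
    -- surjectivity of ker d₂ → (I,2)
    (∀ w ∈ I2 (DihedralGroup n),
      ∃ a b : MonoidAlgebra ℤ (DihedralGroup n),
        (a * NxD n + b * (1 + XD n * YD n),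
          -(a * (1 + YD n)) + b * (XD n - 1) + w * (YD n + 1)) = 0) := by
  open DihedralGroupRing in
  exact ⟨fun v ↦ by simpa only [ι_apply, d₂_apply] using d₂_ι v,
    fun v ↦ by simpa only [ι_apply] using ι_eq_zero_iff v,
    fun a b c h ↦ mem_I2_of_d₂_eq_zero ((d₂_apply a b c).trans h),
    fun a b c h ↦ by
      simpa only [ι_apply] using eq_zero_iff_exists_eq_ι ((d₂_apply a b c).trans h),
    fun w hw ↦ by simpa only [d₂_apply] using exists_d₂_eq_zero_of_mem_I2 hw⟩
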